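/- arXiv:1006.2052 — 9 statements merged into one kernel-verified Lean document; each statement's English description precedes it below -/
import Mathlib

section
/- Let X be a complex Banach space and T a contraction on X satisfying condition (S). Then every point λ of the boundary spectrum of T (i.e., λ ∈ σ(T) with |λ| = 1) equals 1; that is, T is primitive. -/
open Filter Topology

/-!
A point `λ` of the spectrum with `‖λ‖ = 1 ≥ ‖T‖` is a limit of the resolvent points `(1 + t) λ`,
`t ↓ 0`. Since `‖(μ - T)⁻¹‖ ≥ 1 / ‖λ - μ‖` for a resolvent point `μ` (otherwise `λ - T` would be
invertible by a Neumann series), `λ` is an approximate eigenvalue: there are unit vectors `x n`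
with `λ x n - T x n → 0`. Then `‖T x n‖ → 1`, so condition (S) gives `x n - T x n → 0`, and
`|1 - λ| = ‖x n - λ x n‖ → 0`.
-/

theorem Units.norm_inv_inv_le_norm_sub_of_not_isUnit {R : Type*} [NormedRing R]
    [HasSummableGeomSeries R] (u : Rˣ) {a : R} (ha : ¬IsUnit a) :
    ‖(↑u⁻¹ : R)‖⁻¹ ≤ ‖a - u‖ :=
  not_lt.mp fun h => ha (u.ofNearby a h).isUnit

namespace ContinuousLinearMap

variable {𝕜 E : Type*} [RCLike 𝕜] [NormedAddCommGroup E] [NormedSpace 𝕜 E]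

def IsApproxEigenvalue (T : E →L[𝕜] E) (k : 𝕜) : Prop :=
  ∃ x : ℕ → E, (∀ n, ‖x n‖ = 1) ∧ Tendsto (fun n => ‖k • x n - T (x n)‖) atTop (𝓝 0)

theorem exists_norm_apply_lt_of_inv_lt_norm_inv (u : (E →L[𝕜] E)ˣ) {r : ℝ} (hr : 0 < r)
    (hu : r⁻¹ < ‖(↑u⁻¹ : E →L[𝕜] E)‖) : ∃ z, z ≠ 0 ∧ ‖(u : E →L[𝕜] E) z‖ < r * ‖z‖ := by
  obtain ⟨y, hy, hz⟩ := exists_lt_apply_of_lt_opNorm _ hu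
  set z := (↑u⁻¹ : E →L[𝕜] E) y
  have hzpos : 0 < ‖z‖ := (inv_pos.mpr hr).trans hz
  have huz : (u : E →L[𝕜] E) z = y := by
    change ((u : E →L[𝕜] E) * ↑u⁻¹) y = y
    rw [Units.mul_inv, one_apply_eq_self]
  refine ⟨z, norm_pos_iff.mp hzpos, ?_⟩
  rw [huz]
  calc ‖y‖ < 1 := hy
    _ < r * ‖z‖ := by rwa [← inv_mul_lt_iff₀ hr, mul_one]

theorem exists_norm_apply_lt_of_not_isUnit [CompleteSpace E] {a : E →L[𝕜] E} (ha : ¬IsUnit a)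
    (u : (E →L[𝕜] E)ˣ) {ε : ℝ} (hε : 0 < ε) (hau : ‖a - u‖ < ε) :
    ∃ z, z ≠ 0 ∧ ‖a z‖ < 2 * ε * ‖z‖ := by
  have : Nontrivial (E →L[𝕜] E) :=
    not_subsingleton_iff_nontrivial.mp fun _ => ha (isUnit_of_subsingleton a)
  have hinv : ε⁻¹ < ‖(↑u⁻¹ : E →L[𝕜] E)‖ :=
    inv_lt_of_inv_lt₀ (Units.norm_pos u⁻¹)
      ((u.norm_inv_inv_le_norm_sub_of_not_isUnit ha).trans_lt hau)
  obtain ⟨z, hz, huz⟩ := exists_norm_apply_lt_of_inv_lt_norm_inv u hε hinv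
  have hzpos : 0 < ‖z‖ := norm_pos_iff.mpr hz
  refine ⟨z, hz, ?_⟩
  calc ‖a z‖ = ‖(a - u) z + (u : E →L[𝕜] E) z‖ := by rw [sub_apply, sub_add_cancel]
    _ ≤ ‖a - u‖ * ‖z‖ + ‖(u : E →L[𝕜] E) z‖ := norm_add_le_of_le (le_opNorm _ _) le_rfl
    _ < ε * ‖z‖ + ε * ‖z‖ := by gcongr
    _ = 2 * ε * ‖z‖ := by ring

theorem isApproxEigenvalue_of_mem_spectrum_of_mem_closure_resolventSet [CompleteSpace E]
    {T : E →L[𝕜] E} {k : 𝕜} (hk : k ∈ spectrum 𝕜 T) (hkρ : k ∈ closure (resolventSet 𝕜 T)) :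
    IsApproxEigenvalue T k := by
  have approx : ∀ n : ℕ, ∃ x : E, ‖x‖ = 1 ∧ ‖k • x - T x‖ < 1 / ((n : ℝ) + 1) := by
    intro n
    obtain ⟨μ, hμ, hkμ⟩ := Metric.mem_closure_iff.mp hkρ (1 / (2 * ((n : ℝ) + 1))) (by positivity)
    obtain ⟨u, hu⟩ := hμ
    set a := algebraMap 𝕜 (E →L[𝕜] E) k - T
    have hau : ‖a - u‖ < 1 / (2 * ((n : ℝ) + 1)) := by
      have : a - u = algebraMap 𝕜 (E →L[𝕜] E) (k - μ) := by
        simp only [a, hu, map_sub]; abel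
      rw [this, norm_algebraMap, ← dist_eq_norm]
      exact (mul_le_of_le_one_right dist_nonneg norm_id_le).trans_lt hkμ
    obtain ⟨z, hz, haz⟩ := exists_norm_apply_lt_of_not_isUnit hk u (by positivity) hau
    refine ⟨(‖z‖⁻¹ : 𝕜) • z, norm_smul_inv_norm hz, ?_⟩
    have hzpos : 0 < ‖z‖ := norm_pos_iff.mpr hz
    have hax : k • ((‖z‖⁻¹ : 𝕜) • z) - T ((‖z‖⁻¹ : 𝕜) • z) = (‖z‖⁻¹ : 𝕜) • a z := by
      simp [a, Algebra.algebraMap_eq_smul_one, smul_sub, smul_comm k]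
    rw [hax, norm_smul, norm_inv, RCLike.norm_ofReal, abs_norm]
    calc ‖z‖⁻¹ * ‖a z‖ < ‖z‖⁻¹ * (2 * (1 / (2 * ((n : ℝ) + 1))) * ‖z‖) := by gcongr
      _ = 1 / ((n : ℝ) + 1) := by field_simp
  choose x hx1 hx using approx
  exact ⟨x, hx1, squeeze_zero (fun n => norm_nonneg _) (fun n => (hx n).le)
    tendsto_one_div_add_atTop_nhds_zero_nat⟩

theorem mem_closure_resolventSet_of_norm_le [CompleteSpace E] {T : E →L[𝕜] E} {k : 𝕜}
    (hk : k ≠ 0) (hTk : ‖T‖ ≤ ‖k‖) : k ∈ closure (resolventSet 𝕜 T) := by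
  have hlim : Tendsto (fun t : ℝ => ((1 + t : ℝ) : 𝕜) * k) (𝓝[>] 0) (𝓝 k) := by
    have : Continuous (fun t : ℝ => ((1 + t : ℝ) : 𝕜) * k) := by fun_prop
    simpa using (this.tendsto 0).mono_left nhdsWithin_le_nhds
  refine mem_closure_of_tendsto hlim (eventually_nhdsWithin_of_forall fun t (ht : 0 < t) => ?_)
  apply spectrum.mem_resolventSet_of_norm_lt_mul
  rw [norm_mul, RCLike.norm_ofReal, abs_of_pos (by linarith)]
  calc ‖T‖ * ‖(1 : E →L[𝕜] E)‖ ≤ ‖T‖ := mul_le_of_le_one_right (norm_nonneg _) norm_id_le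
    _ ≤ ‖k‖ := hTk
    _ < (1 + t) * ‖k‖ := by nlinarith [norm_pos_iff.mpr hk]

theorem tendsto_norm_apply_of_tendsto_norm_smul_sub {T : E →L[𝕜] E} {k : 𝕜} {x : ℕ → E}
    (hx1 : ∀ n, ‖x n‖ = 1) (hx : Tendsto (fun n => ‖k • x n - T (x n)‖) atTop (𝓝 0)) :
    Tendsto (fun n => ‖T (x n)‖) atTop (𝓝 ‖k‖) := by
  refine tendsto_iff_dist_tendsto_zero.mpr (squeeze_zero (fun _ => dist_nonneg) (fun n => ?_) hx)
  calc dist ‖T (x n)‖ ‖k‖ = |‖T (x n)‖ - ‖k • x n‖| := by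
        rw [Real.dist_eq, norm_smul, hx1, mul_one]
    _ ≤ ‖k • x n - T (x n)‖ := by rw [norm_sub_rev (k • x n)]; exact abs_norm_sub_norm_le _ _

theorem eq_of_tendsto_norm_smul_sub {T : E →L[𝕜] E} {k l : 𝕜} {x : ℕ → E}
    (hx1 : ∀ n, ‖x n‖ = 1) (hk : Tendsto (fun n => ‖k • x n - T (x n)‖) atTop (𝓝 0))
    (hl : Tendsto (fun n => ‖l • x n - T (x n)‖) atTop (𝓝 0)) : k = l := by
  have hbound : ∀ n, ‖k - l‖ ≤ ‖k • x n - T (x n)‖ + ‖l • x n - T (x n)‖ := fun n =>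
    calc ‖k - l‖ = ‖(k • x n - T (x n)) - (l • x n - T (x n))‖ := by
          rw [sub_sub_sub_cancel_right, ← sub_smul, norm_smul, hx1, mul_one]
      _ ≤ _ := norm_sub_le _ _
  have := ge_of_tendsto' (by simpa using hk.add hl) hbound
  exact sub_eq_zero.mp (norm_le_zero_iff.mp this)

end ContinuousLinearMap

open ContinuousLinearMap in
theorem stmt1 {X : Type*} [NormedAddCommGroup X] [NormedSpace ℂ X] [CompleteSpace X]
    (T : X →L[ℂ] X) (hT : ‖T‖ ≤ 1)
    (hS : ∀ x : ℕ → X, (∀ k, ‖x k‖ ≤ 1) →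
      Tendsto (fun k => ‖T (x k)‖) atTop (𝓝 1) →
      Tendsto (fun k => ‖x k - T (x k)‖) atTop (𝓝 0)) :
    ∀ lam ∈ spectrum ℂ T, ‖lam‖ = 1 → lam = 1 := by
  intro lam hlam hnorm
  have hlam0 : lam ≠ 0 := norm_ne_zero_iff.mp (hnorm ▸ one_ne_zero)
  obtain ⟨x, hx1, hx⟩ := isApproxEigenvalue_of_mem_spectrum_of_mem_closure_resolventSet hlam
    (mem_closure_resolventSet_of_norm_le hlam0 (hnorm ▸ hT))
  have hTx : Tendsto (fun n => ‖T (x n)‖) atTop (𝓝 1) :=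
    hnorm ▸ tendsto_norm_apply_of_tendsto_norm_smul_sub hx1 hx
  exact eq_of_tendsto_norm_smul_sub hx1 hx (by simpa using hS x (fun n => (hx1 n).le) hTx)
end

section
/- Let A and B be contractions on a complex Banach space X both satisfying Halperin's condition (H) with constants K(A) and K(B) respectively. Then AB satisfies condition (H) with constant at most 2·max(K(A), K(B)): for all x, ‖x - ABx‖² ≤ 2·max(K(A),K(B))·(‖x‖² - ‖ABx‖²). -/
theorem stmt4 {X : Type*} [NormedAddCommGroup X] [NormedSpace ℂ X] [CompleteSpace X]
    (A B : X →L[ℂ] X) (hA : ‖A‖ ≤ 1) (hB : ‖B‖ ≤ 1)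
    (KA KB : ℝ) (hKA0 : 0 ≤ KA) (hKB0 : 0 ≤ KB)
    (hHA : ∀ x : X, ‖x - A x‖ ^ 2 ≤ KA * (‖x‖ ^ 2 - ‖A x‖ ^ 2))
    (hHB : ∀ x : X, ‖x - B x‖ ^ 2 ≤ KB * (‖x‖ ^ 2 - ‖B x‖ ^ 2)) :
    ∀ x : X, ‖x - (A * B) x‖ ^ 2 ≤ 2 * max KA KB * (‖x‖ ^ 2 - ‖(A * B) x‖ ^ 2) := by
  intro x
  have hABx : (A * B) x = A (B x) := rfl
  have hBle : ‖B x‖ ≤ ‖x‖ := by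
    calc ‖B x‖ ≤ ‖B‖ * ‖x‖ := B.le_opNorm x
    _ ≤ 1 * ‖x‖ := by gcongr
    _ = ‖x‖ := one_mul _
  have hAle : ‖A (B x)‖ ≤ ‖B x‖ := by
    calc ‖A (B x)‖ ≤ ‖A‖ * ‖B x‖ := A.le_opNorm _
    _ ≤ 1 * ‖B x‖ := by gcongr
    _ = ‖B x‖ := one_mul _
  have htri : ‖x - (A * B) x‖ ≤ ‖x - B x‖ + ‖B x - A (B x)‖ := by
    rw [hABx]
    calc ‖x - A (B x)‖ = ‖(x - B x) + (B x - A (B x))‖ := by rw [sub_add_sub_cancel]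
    _ ≤ ‖x - B x‖ + ‖B x - A (B x)‖ := norm_add_le _ _
  have h1 := hHB x
  have h2 := hHA (B x)
  have hMA : KA ≤ max KA KB := le_max_left _ _
  have hMB : KB ≤ max KA KB := le_max_right _ _
  have ha : 0 ≤ ‖x‖ ^ 2 - ‖B x‖ ^ 2 := by nlinarith [norm_nonneg (B x)]
  have hb : 0 ≤ ‖B x‖ ^ 2 - ‖A (B x)‖ ^ 2 := by nlinarith [norm_nonneg (A (B x))]
  have hsq : ‖x - (A * B) x‖ ^ 2 ≤ 2 * (‖x - B x‖ ^ 2 + ‖B x - A (B x)‖ ^ 2) := by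
    nlinarith [norm_nonneg (x - (A * B) x), norm_nonneg (x - B x),
      norm_nonneg (B x - A (B x)), sq_nonneg (‖x - B x‖ - ‖B x - A (B x)‖)]
  rw [hABx]
  calc ‖x - A (B x)‖ ^ 2 ≤ 2 * (‖x - B x‖ ^ 2 + ‖B x - A (B x)‖ ^ 2) := by
        rw [← hABx]; exact hsq
  _ ≤ 2 * (KB * (‖x‖ ^ 2 - ‖B x‖ ^ 2) + KA * (‖B x‖ ^ 2 - ‖A (B x)‖ ^ 2)) := by linarith
  _ ≤ 2 * max KA KB * (‖x‖ ^ 2 - ‖A (B x)‖ ^ 2) := by nlinarith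
end

section
/- Let A and B be contractions on a complex Banach space with r ∈ (0,1), s ∈ (0,1) such that ‖A - rI‖ ≤ 1 - r and ‖B - sI‖ ≤ 1 - s. Then ‖AB - rsI‖ ≤ 1 - rs. -/
theorem stmt5 {X : Type*} [NormedAddCommGroup X] [NormedSpace ℂ X] [CompleteSpace X]
    (A B : X →L[ℂ] X) (hA : ‖A‖ ≤ 1) (hB : ‖B‖ ≤ 1)
    (r s : ℝ) (hr0 : 0 < r) (hr1 : r < 1) (hs0 : 0 < s) (hs1 : s < 1)
    (hDA : ‖A - (r : ℂ) • (1 : X →L[ℂ] X)‖ ≤ 1 - r)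
    (hDB : ‖B - (s : ℂ) • (1 : X →L[ℂ] X)‖ ≤ 1 - s) :
    ‖A * B - ((r * s : ℝ) : ℂ) • (1 : X →L[ℂ] X)‖ ≤ 1 - r * s := by
  have key : A * B - ((r * s : ℝ) : ℂ) • (1 : X →L[ℂ] X)
      = (A - (r : ℂ) • 1) * B + (r : ℂ) • (B - (s : ℂ) • 1) := by
    rw [sub_mul, smul_mul_assoc, one_mul, smul_sub, smul_smul]
    push_cast
    abel
  rw [key]
  calc ‖(A - (r : ℂ) • 1) * B + (r : ℂ) • (B - (s : ℂ) • 1)‖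
      ≤ ‖(A - (r : ℂ) • 1) * B‖ + ‖(r : ℂ) • (B - (s : ℂ) • 1)‖ := norm_add_le _ _
    _ ≤ ‖A - (r : ℂ) • 1‖ * ‖B‖ + ‖(r : ℂ)‖ * ‖B - (s : ℂ) • 1‖ := by
        gcongr
        · exact norm_mul_le _ _
        · exact (norm_smul (r:ℂ) (B - (s:ℂ) • 1)).le
    _ ≤ (1 - r) * 1 + r * (1 - s) := by
        have : ‖(r : ℂ)‖ = r := by
          simp [Complex.norm_real, abs_of_pos hr0]
        rw [this]
        gcongr <;> first | linarith | exact hr0.le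
    _ = 1 - r * s := by ring
end

section
/- The set of contractions on a complex Banach space satisfying condition (S) is closed under composition: if A and B are contractions such that (‖x_k‖ ≤ 1, ‖Ax_k‖ → 1 ⟹ x_k - Ax_k → 0) and similarly for B, then AB satisfies the same property. -/
open Filter Topology

theorem stmt7 {X : Type*} [NormedAddCommGroup X] [NormedSpace ℂ X] [CompleteSpace X]
    (A B : X →L[ℂ] X) (hA : ‖A‖ ≤ 1) (hB : ‖B‖ ≤ 1)
    (hSA : ∀ x : ℕ → X, (∀ k, ‖x k‖ ≤ 1) →
      Tendsto (fun k => ‖A (x k)‖) atTop (𝓝 1) →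
      Tendsto (fun k => ‖x k - A (x k)‖) atTop (𝓝 0))
    (hSB : ∀ x : ℕ → X, (∀ k, ‖x k‖ ≤ 1) →
      Tendsto (fun k => ‖B (x k)‖) atTop (𝓝 1) →
      Tendsto (fun k => ‖x k - B (x k)‖) atTop (𝓝 0)) :
    ∀ x : ℕ → X, (∀ k, ‖x k‖ ≤ 1) →
      Tendsto (fun k => ‖(A * B) (x k)‖) atTop (𝓝 1) →
      Tendsto (fun k => ‖x k - (A * B) (x k)‖) atTop (𝓝 0) := by
  intro x hx hAB
  have hAB' : ∀ k, (A * B) (x k) = A (B (x k)) := fun k => rfl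
  have hBle : ∀ k, ‖B (x k)‖ ≤ 1 := fun k =>
    le_trans ((B.le_opNorm (x k)).trans (by
      have := mul_le_mul hB (hx k) (norm_nonneg _) zero_le_one
      simpa using this)) le_rfl
  have hlow : ∀ k, ‖(A * B) (x k)‖ ≤ ‖B (x k)‖ := by
    intro k
    rw [hAB' k]
    calc ‖A (B (x k))‖ ≤ ‖A‖ * ‖B (x k)‖ := A.le_opNorm _
    _ ≤ 1 * ‖B (x k)‖ := by
        exact mul_le_mul_of_nonneg_right hA (norm_nonneg _)
    _ = ‖B (x k)‖ := one_mul _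
  have hBnorm : Tendsto (fun k => ‖B (x k)‖) atTop (𝓝 1) := by
    refine tendsto_of_tendsto_of_tendsto_of_le_of_le hAB tendsto_const_nhds
      (fun k => hlow k) (fun k => hBle k)
  have h1 := hSB x hx hBnorm
  have h2 := hSA (fun k => B (x k)) hBle (by simpa [hAB'] using hAB)
  have : Tendsto (fun k => ‖x k - B (x k)‖ + ‖B (x k) - A (B (x k))‖) atTop (𝓝 0) := by
    simpa using h1.add h2
  refine squeeze_zero (fun k => norm_nonneg _) (fun k => ?_) this
  rw [hAB' k]
  calc ‖x k - A (B (x k))‖ = ‖(x k - B (x k)) + (B (x k) - A (B (x k)))‖ := by rw [sub_add_sub_cancel]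
  _ ≤ _ := norm_add_le _ _
end

section
/- The set of contractions of class (S) on a complex Banach space is convex: if A₁,…,A_N are contractions satisfying condition (S) and α₁,…,α_N > 0 with Σα_k = 1, then T = Σ α_k A_k satisfies condition (S). -/
open Filter Topology

/-!
If `‖∑ αₖ Aₖ xⱼ‖ → 1` while every `‖Aₘ xⱼ‖ ≤ 1`, then the triangle inequality
`‖∑ αₘ Aₘ xⱼ‖ ≤ αₖ ‖Aₖ xⱼ‖ + (1 - αₖ)` forces `‖Aₖ xⱼ‖ → 1` for every `k` with `αₖ > 0`.
Condition (S) for each `Aₖ` then gives `xⱼ - Aₖ xⱼ → 0`, and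
`xⱼ - T xⱼ = ∑ αₖ (xⱼ - Aₖ xⱼ)`.
-/

def ConditionS {E : Type*} [SeminormedAddCommGroup E] (f : E → E) : Prop :=
  ∀ x : ℕ → E, (∀ j, ‖x j‖ ≤ 1) →
    Tendsto (fun j => ‖f (x j)‖) atTop (𝓝 1) → Tendsto (fun j => ‖x j - f (x j)‖) atTop (𝓝 0)

section ConvexCombination

variable {E ι : Type*} [SeminormedAddCommGroup E] [NormedSpace ℝ E] [Fintype ι]
  {α : ι → ℝ}

theorem norm_sum_smul_le_of_norm_le_one (hα : ∀ m, 0 ≤ α m) (hsum : ∑ m, α m = 1)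
    {y : ι → E} (hy : ∀ m, ‖y m‖ ≤ 1) (k : ι) :
    ‖∑ m, α m • y m‖ ≤ α k * ‖y k‖ + (1 - α k) := by
  classical
  have hrest : ∑ m ∈ Finset.univ.erase k, α m = 1 - α k := by
    rw [← hsum, ← Finset.add_sum_erase _ _ (Finset.mem_univ k), add_sub_cancel_left]
  calc ‖∑ m, α m • y m‖ ≤ ∑ m, α m * ‖y m‖ := by
        refine (norm_sum_le _ _).trans_eq (Finset.sum_congr rfl fun m _ => ?_)
        rw [norm_smul, Real.norm_of_nonneg (hα m)]
    _ = α k * ‖y k‖ + ∑ m ∈ Finset.univ.erase k, α m * ‖y m‖ :=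
        (Finset.add_sum_erase _ _ (Finset.mem_univ k)).symm
    _ ≤ α k * ‖y k‖ + ∑ m ∈ Finset.univ.erase k, α m := by
        gcongr with m
        exact mul_le_of_le_one_right (hα m) (hy m)
    _ = α k * ‖y k‖ + (1 - α k) := by rw [hrest]

theorem tendsto_norm_of_tendsto_norm_sum_smul {β : Type*} {l : Filter β}
    (hα : ∀ m, 0 ≤ α m) (hsum : ∑ m, α m = 1) {y : ι → β → E} (hy : ∀ m b, ‖y m b‖ ≤ 1)
    (h : Tendsto (fun b => ‖∑ m, α m • y m b‖) l (𝓝 1)) {k : ι} (hk : 0 < α k) :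
    Tendsto (fun b => ‖y k b‖) l (𝓝 1) := by
  have hlow : Tendsto (fun b => (‖∑ m, α m • y m b‖ - (1 - α k)) / α k) l (𝓝 1) := by
    convert (h.sub_const (1 - α k)).div_const (α k) using 2
    field_simp
    ring
  refine tendsto_of_tendsto_of_tendsto_of_le_of_le hlow tendsto_const_nhds (fun b => ?_)
    (fun b => hy k b)
  rw [div_le_iff₀ hk]
  linarith [norm_sum_smul_le_of_norm_le_one hα hsum (fun m => hy m b) k]

theorem ConditionS.sum_smul {A : ι → E → E} (hA : ∀ k v, ‖v‖ ≤ 1 → ‖A k v‖ ≤ 1)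
    (hα : ∀ k, 0 < α k) (hsum : ∑ k, α k = 1) (hS : ∀ k, ConditionS (A k)) :
    ConditionS fun v => ∑ k, α k • A k v := by
  intro x hx hT
  have hfix : ∀ k, Tendsto (fun j => x j - A k (x j)) atTop (𝓝 0) := fun k =>
    tendsto_zero_iff_norm_tendsto_zero.mpr <| hS k x hx <|
      tendsto_norm_of_tendsto_norm_sum_smul (fun m => (hα m).le) hsum
        (fun m j => hA m (x j) (hx j)) hT (hα k)
  have hdiff : ∀ j, x j - ∑ k, α k • A k (x j) = ∑ k, α k • (x j - A k (x j)) := by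
    intro j
    rw [Finset.sum_congr rfl fun k _ => smul_sub (α k) (x j) (A k (x j)),
      Finset.sum_sub_distrib, ← Finset.sum_smul, hsum, one_smul]
  simp only [hdiff]
  rw [← tendsto_zero_iff_norm_tendsto_zero]
  simpa using tendsto_finsetSum Finset.univ fun k _ => (hfix k).const_smul (α k)

end ConvexCombination

theorem stmt8_general {X : Type*} [NormedAddCommGroup X] [NormedSpace ℂ X]
    (N : ℕ) (A : Fin N → (X →L[ℂ] X)) (hA : ∀ k, ‖A k‖ ≤ 1)
    (α : Fin N → ℝ) (hα : ∀ k, 0 < α k) (hsum : ∑ k, α k = 1)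
    (hS : ∀ k, ∀ x : ℕ → X, (∀ j, ‖x j‖ ≤ 1) →
      Tendsto (fun j => ‖(A k) (x j)‖) atTop (𝓝 1) →
      Tendsto (fun j => ‖x j - (A k) (x j)‖) atTop (𝓝 0)) :
    ∀ x : ℕ → X, (∀ j, ‖x j‖ ≤ 1) →
      Tendsto (fun j => ‖(∑ k, (α k : ℂ) • A k) (x j)‖) atTop (𝓝 1) →
      Tendsto (fun j => ‖x j - (∑ k, (α k : ℂ) • A k) (x j)‖) atTop (𝓝 0) := by
  have hball : ∀ k v, ‖v‖ ≤ 1 → ‖A k v‖ ≤ 1 := fun k v hv =>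
    (A k).le_of_opNorm_le (hA k) v |>.trans (by simpa using hv)
  have hT : ∀ v, (∑ k, (α k : ℂ) • A k) v = ∑ k, α k • A k v := by
    simp [Complex.coe_smul]
  simp only [hT]
  exact ConditionS.sum_smul hball hα hsum hS

theorem stmt8 {X : Type*} [NormedAddCommGroup X] [NormedSpace ℂ X] [CompleteSpace X]
    (N : ℕ) (A : Fin N → (X →L[ℂ] X)) (hA : ∀ k, ‖A k‖ ≤ 1)
    (α : Fin N → ℝ) (hα : ∀ k, 0 < α k) (hsum : ∑ k, α k = 1)
    (hS : ∀ k, ∀ x : ℕ → X, (∀ j, ‖x j‖ ≤ 1) →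
      Tendsto (fun j => ‖(A k) (x j)‖) atTop (𝓝 1) →
      Tendsto (fun j => ‖x j - (A k) (x j)‖) atTop (𝓝 0)) :
    ∀ x : ℕ → X, (∀ j, ‖x j‖ ≤ 1) →
      Tendsto (fun j => ‖(∑ k, (α k : ℂ) • A k) (x j)‖) atTop (𝓝 1) →
      Tendsto (fun j => ‖x j - (∑ k, (α k : ℂ) • A k) (x j)‖) atTop (𝓝 0) :=
  stmt8_general N A hA α hα hsum hS
end

section
/- Every hermitian projection P on a complex Banach space satisfies ‖P - (1/2)I‖ ≤ 1/2; in particular ‖P‖ ≤ 1, so every hermitian projection is an orthoprojection. -/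
/-!
For an idempotent `p`, `(c • p) ^ n = c ^ n • p` when `n ≥ 1`, so the exponential series sums to
`exp (c • p) = (1 - p) + exp c • p`. At `c = iπ` this gives `exp (iπ p) = 1 - 2p`, i.e.
`p - 1/2 = -(1/2) exp (iπ p)`, and hermitian-ness bounds the right-hand side by `1/2`.
-/

open Nat NormedSpace

section ExpIdempotent

variable {𝔸 : Type*} [Ring 𝔸] [Algebra ℂ 𝔸] [TopologicalSpace 𝔸] [IsTopologicalRing 𝔸]
  [ContinuousSMul ℂ 𝔸] [T2Space 𝔸] {p : 𝔸}

theorem IsIdempotentElem.exp_smul (hp : IsIdempotentElem p) (c : ℂ) :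
    exp (c • p) = (1 - p) + Complex.exp c • p := by
  have hterm (n : ℕ) : (n !⁻¹ : ℂ) • (c • p) ^ n
      = (if n = 0 then 1 - p else 0) + ((n !⁻¹ : ℂ) • c ^ n) • p := by
    rcases eq_or_ne n 0 with rfl | hn
    · simp
    · rw [smul_pow, hp.pow_eq hn, smul_smul, if_neg hn, zero_add, smul_eq_mul, mul_comm]
  rw [exp_eq_tsum ℂ]
  refine HasSum.tsum_eq ?_
  simp_rw [hterm]
  refine (hasSum_ite_eq 0 (1 - p)).add ?_
  rw [Complex.exp_eq_exp_ℂ]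
  exact (exp_series_hasSum_exp' c).smul_const p

theorem IsIdempotentElem.exp_I_mul_pi_smul (hp : IsIdempotentElem p) :
    exp ((Complex.I * Real.pi) • p) = 1 - (2 : ℂ) • p := by
  rw [hp.exp_smul, mul_comm, Complex.exp_pi_mul_I]
  module

end ExpIdempotent

section NormedAlgebra

variable {𝔸 : Type*} [NormedRing 𝔸] [NormedAlgebra ℂ 𝔸]

theorem IsIdempotentElem.norm_sub_half_smul_one {p : 𝔸} (hp : IsIdempotentElem p) :
    ‖p - (1 / 2 : ℂ) • 1‖ = ‖exp ((Complex.I * Real.pi) • p)‖ / 2 := by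
  have hcentre : p - (1 / 2 : ℂ) • 1 = (-(1 / 2) : ℂ) • exp ((Complex.I * Real.pi) • p) := by
    rw [hp.exp_I_mul_pi_smul]
    module
  rw [hcentre, norm_smul]
  norm_num
  ring

theorem norm_le_one_of_norm_sub_half_smul_one_le (hone : ‖(1 : 𝔸)‖ ≤ 1) {a : 𝔸}
    (ha : ‖a - (1 / 2 : ℂ) • 1‖ ≤ 1 / 2) : ‖a‖ ≤ 1 := by
  have hhalf : ‖(1 / 2 : ℂ) • (1 : 𝔸)‖ ≤ 1 / 2 := by
    rw [norm_smul]
    norm_num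
    linarith
  calc ‖a‖ = ‖(a - (1 / 2 : ℂ) • 1) + (1 / 2 : ℂ) • 1‖ := by rw [sub_add_cancel]
    _ ≤ ‖a - (1 / 2 : ℂ) • 1‖ + ‖(1 / 2 : ℂ) • (1 : 𝔸)‖ := norm_add_le _ _
    _ ≤ 1 / 2 + 1 / 2 := add_le_add ha hhalf
    _ = 1 := by norm_num

end NormedAlgebra

theorem stmt9_general {X : Type*} [NormedAddCommGroup X] [NormedSpace ℂ X]
    (P : X →L[ℂ] X) (hP : P * P = P)
    (hherm : ∀ t : ℝ, ‖NormedSpace.exp ((Complex.I * t) • P)‖ = 1) :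
    ‖P - ((1 / 2 : ℝ) : ℂ) • (1 : X →L[ℂ] X)‖ ≤ 1 / 2 ∧ ‖P‖ ≤ 1 := by
  have hhalf : ((1 / 2 : ℝ) : ℂ) = 1 / 2 := by push_cast; rfl
  have hcentre : ‖P - (1 / 2 : ℂ) • (1 : X →L[ℂ] X)‖ ≤ 1 / 2 := by
    rw [IsIdempotentElem.norm_sub_half_smul_one hP, hherm Real.pi]
  rw [hhalf]
  exact ⟨hcentre,
    norm_le_one_of_norm_sub_half_smul_one_le (ContinuousLinearMap.norm_id_le) hcentre⟩

theorem stmt9 {X : Type*} [NormedAddCommGroup X] [NormedSpace ℂ X] [CompleteSpace X]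
    (P : X →L[ℂ] X) (hP : P * P = P)
    (hherm : ∀ t : ℝ, ‖NormedSpace.exp ((Complex.I * t) • P)‖ = 1) :
    ‖P - ((1 / 2 : ℝ) : ℂ) • (1 : X →L[ℂ] X)‖ ≤ 1 / 2 ∧ ‖P‖ ≤ 1 :=
  stmt9_general P hP hherm
end

section
/- Every orthoprojection P in a uniformly convex Banach space satisfies condition (S): if ‖x_k‖ ≤ 1 and ‖Px_k‖ → 1, then x_k - Px_k → 0 in norm. -/
open Filter Topology

theorem stmt13 {X : Type*} [NormedAddCommGroup X] [NormedSpace ℂ X] [CompleteSpace X]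
    [UniformConvexSpace X]
    (P : X →L[ℂ] X) (hP : P * P = P) (hPnorm : ‖P‖ ≤ 1) :
    ∀ x : ℕ → X, (∀ k, ‖x k‖ ≤ 1) →
      Tendsto (fun k => ‖P (x k)‖) atTop (𝓝 1) →
      Tendsto (fun k => ‖x k - P (x k)‖) atTop (𝓝 0) := by
  intro x hx hlim
  rw [Metric.tendsto_atTop]
  intro ε hε
  obtain ⟨δ, hδ, H⟩ := exists_forall_closed_ball_dist_add_le_two_sub X hε
  have h2 : ∀ᶠ n in atTop, 1 - δ / 2 < ‖P (x n)‖ :=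
    hlim.eventually (eventually_gt_nhds (by linarith))
  obtain ⟨N, hN⟩ := h2.exists_forall_of_atTop
  refine ⟨N, fun n hn => ?_⟩
  have hxn := hx n
  have hPx : ‖P (x n)‖ ≤ 1 := by
    calc ‖P (x n)‖ ≤ ‖P‖ * ‖x n‖ := P.le_opNorm _
    _ ≤ 1 * 1 := mul_le_mul hPnorm hxn (norm_nonneg _) zero_le_one
    _ = 1 := one_mul 1
  rw [Real.dist_eq, sub_zero, abs_of_nonneg (norm_nonneg _)]
  by_contra h
  push_neg at h
  have hub := H hxn hPx h
  have hkey : 2 * ‖P (x n)‖ ≤ ‖x n + P (x n)‖ := by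
    have hPP : P (P (x n)) = P (x n) := by
      have := congrArg (fun Q : X →L[ℂ] X => Q (x n)) hP
      simpa [ContinuousLinearMap.mul_apply] using this
    have : P (x n + P (x n)) = P (x n) + P (x n) := by
      rw [map_add, hPP]
    calc 2 * ‖P (x n)‖ = ‖P (x n) + P (x n)‖ := by
          rw [← two_smul ℝ (P (x n)), norm_smul]; simp
    _ = ‖P (x n + P (x n))‖ := by rw [this]
    _ ≤ ‖P‖ * ‖x n + P (x n)‖ := P.le_opNorm _
    _ ≤ 1 * ‖x n + P (x n)‖ := by
        exact mul_le_mul_of_nonneg_right hPnorm (norm_nonneg _)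
    _ = ‖x n + P (x n)‖ := one_mul _
  have := hN n hn
  linarith
end

section
/- Let A and B be contractions on a Banach space satisfying condition (W'): ‖Ax‖ = ‖x‖ ⟹ Ax = x, and similarly for B. Then Ker(I - AB) = Ker(I - A) ∩ Ker(I - B). -/
/-! If `A (B x) = x` for contractions `A`, `B`, then `‖x‖ ≤ ‖B x‖ ≤ ‖x‖`, so `A` preserves the norm
of `B x`; condition (W') for `A` then forces `A (B x) = B x`, whence `B x = x` and `A x = x`. -/

namespace ContinuousLinearMap

variable {𝕜 E : Type*} [NontriviallyNormedField 𝕜] [SeminormedAddCommGroup E] [NormedSpace 𝕜 E]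
  {A B : E →L[𝕜] E}

theorem norm_apply_eq_of_comp_apply_eq_self (hA : ‖A‖ ≤ 1) (hB : ‖B‖ ≤ 1) {x : E}
    (h : A (B x) = x) : ‖B x‖ = ‖x‖ := by
  refine le_antisymm ?_ ?_
  · simpa using B.le_of_opNorm_le hB x
  · calc ‖x‖ = ‖A (B x)‖ := by rw [h]
      _ ≤ ‖B x‖ := by simpa using A.le_of_opNorm_le hA (B x)

theorem apply_eq_self_of_comp_apply_eq_self (hA : ‖A‖ ≤ 1) (hB : ‖B‖ ≤ 1)
    (hWA : ∀ x : E, ‖A x‖ = ‖x‖ → A x = x) {x : E} (h : A (B x) = x) :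
    A x = x ∧ B x = x := by
  have hBx : ‖B x‖ = ‖x‖ := norm_apply_eq_of_comp_apply_eq_self hA hB h
  have hABx : A (B x) = B x := hWA _ (by rw [h, hBx])
  have hB_fix : B x = x := hABx.symm.trans h
  exact ⟨by rwa [hB_fix] at hABx, hB_fix⟩

end ContinuousLinearMap

theorem stmt14_general {X : Type*} [NormedAddCommGroup X] [NormedSpace ℂ X]
    (A B : X →L[ℂ] X) (hA : ‖A‖ ≤ 1) (hB : ‖B‖ ≤ 1)
    (hWA : ∀ x : X, ‖A x‖ = ‖x‖ → A x = x) :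
    LinearMap.ker ((1 - A * B : X →L[ℂ] X) : X →ₗ[ℂ] X) = LinearMap.ker ((1 - A : X →L[ℂ] X) : X →ₗ[ℂ] X) ⊓ LinearMap.ker ((1 - B : X →L[ℂ] X) : X →ₗ[ℂ] X) := by
  ext x
  simp only [LinearMap.mem_ker, Submodule.mem_inf, ContinuousLinearMap.coe_coe,
    FunLike.coe_sub, Pi.sub_apply, one_apply_eq_self,
    mul_apply_eq_comp, sub_eq_zero, eq_comm (a := x)]
  constructor
  · exact ContinuousLinearMap.apply_eq_self_of_comp_apply_eq_self hA hB hWA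
  · rintro ⟨hAx, hBx⟩
    rw [hBx, hAx]

theorem stmt14 {X : Type*} [NormedAddCommGroup X] [NormedSpace ℂ X] [CompleteSpace X]
    (A B : X →L[ℂ] X) (hA : ‖A‖ ≤ 1) (hB : ‖B‖ ≤ 1)
    (hWA : ∀ x : X, ‖A x‖ = ‖x‖ → A x = x)
    (hWB : ∀ x : X, ‖B x‖ = ‖x‖ → B x = x) :
    LinearMap.ker ((1 - A * B : X →L[ℂ] X) : X →ₗ[ℂ] X) = LinearMap.ker ((1 - A : X →L[ℂ] X) : X →ₗ[ℂ] X) ⊓ LinearMap.ker ((1 - B : X →L[ℂ] X) : X →ₗ[ℂ] X) :=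
  stmt14_general A B hA hB hWA
end

section
/- Let A₁,…,A_N be contractions on a Banach space each satisfying condition (W') (‖A_k x‖ = ‖x‖ ⟹ A_k x = x), and let T = Σ α_k A_k with all α_k > 0 and Σ α_k = 1. Then Ker(I - T) = ∩_k Ker(I - A_k). -/
/-!
If `T x = x` with `T = ∑ αₖ Aₖ`, then `‖x‖ ≤ ∑ αₖ ‖Aₖ x‖` while each `‖Aₖ x‖ ≤ ‖x‖`; since the
weights are positive and sum to `1`, every `‖Aₖ x‖` equals `‖x‖`, and condition (W') turns this
into `Aₖ x = x`. The converse inclusion is immediate from `∑ αₖ = 1`.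
-/

open Finset

theorem eq_of_le_of_le_sum_mul {ι : Type*} [Fintype ι] {w a : ι → ℝ} {b : ℝ}
    (hw : ∀ i, 0 < w i) (hw1 : ∑ i, w i = 1) (ha : ∀ i, a i ≤ b) (hb : b ≤ ∑ i, w i * a i)
    (i : ι) : a i = b := by
  have hgap_nonneg : ∀ j ∈ univ, 0 ≤ w j * (b - a j) :=
    fun j _ => mul_nonneg (hw j).le (sub_nonneg.mpr (ha j))
  have hgap_sum : ∑ j, w j * (b - a j) = 0 := by
    refine le_antisymm ?_ (sum_nonneg hgap_nonneg)
    simp only [mul_sub, sum_sub_distrib, ← sum_mul, hw1, one_mul]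
    linarith
  have := (sum_eq_zero_iff_of_nonneg hgap_nonneg).mp hgap_sum i (mem_univ i)
  linarith [(mul_eq_zero.mp this).resolve_left (hw i).ne']

section

variable {𝕜 E ι : Type*} [RCLike 𝕜] [SeminormedAddCommGroup E] [NormedSpace 𝕜 E] [Fintype ι]
  {w : ι → ℝ}

theorem norm_eq_of_norm_le_of_sum_smul_eq (hw : ∀ i, 0 < w i) (hw1 : ∑ i, w i = 1)
    {y : ι → E} {x : E} (hy : ∀ i, ‖y i‖ ≤ ‖x‖) (hx : ∑ i, (w i : 𝕜) • y i = x) (i : ι) :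
    ‖y i‖ = ‖x‖ := by
  refine eq_of_le_of_le_sum_mul hw hw1 hy ?_ i
  calc ‖x‖ = ‖∑ j, (w j : 𝕜) • y j‖ := by rw [hx]
    _ ≤ ∑ j, ‖(w j : 𝕜) • y j‖ := norm_sum_le _ _
    _ = ∑ j, w j * ‖y j‖ := by simp only [norm_smul, RCLike.norm_ofReal, abs_of_pos (hw _)]

theorem apply_eq_self_of_sum_smul_apply_eq_self {A : ι → E →L[𝕜] E} (hA : ∀ i, ‖A i‖ ≤ 1)
    (hW : ∀ i x, ‖A i x‖ = ‖x‖ → A i x = x) (hw : ∀ i, 0 < w i) (hw1 : ∑ i, w i = 1)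
    {x : E} (hx : (∑ i, (w i : 𝕜) • A i) x = x) (i : ι) : A i x = x := by
  refine hW i x
    (norm_eq_of_norm_le_of_sum_smul_eq (𝕜 := 𝕜) (y := fun j => A j x) hw hw1 (fun j => ?_) ?_ i)
  · simpa using (A j).le_of_opNorm_le (hA j) x
  · simpa using hx

theorem sum_smul_apply_eq_self_of_forall_apply_eq_self {A : ι → E →L[𝕜] E}
    (hw1 : ∑ i, w i = 1) {x : E} (hx : ∀ i, A i x = x) : (∑ i, (w i : 𝕜) • A i) x = x := by
  simp only [_root_.sum_apply, smul_apply, hx, ← sum_smul]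
  rw [← RCLike.ofReal_sum, hw1, RCLike.ofReal_one, one_smul]

end

theorem stmt15_general {X : Type*} [NormedAddCommGroup X] [NormedSpace ℂ X]
    (N : ℕ) (A : Fin N → (X →L[ℂ] X)) (hA : ∀ k, ‖A k‖ ≤ 1)
    (α : Fin N → ℝ) (hα : ∀ k, 0 < α k) (hsum : ∑ k, α k = 1)
    (hW : ∀ k, ∀ x : X, ‖(A k) x‖ = ‖x‖ → (A k) x = x) :
    LinearMap.ker ((1 - ∑ k, (α k : ℂ) • A k : X →L[ℂ] X) : X →ₗ[ℂ] X) = ⨅ k, LinearMap.ker ((1 - A k : X →L[ℂ] X) : X →ₗ[ℂ] X) := by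
  ext x
  simp only [LinearMap.mem_ker, Submodule.mem_iInf, ContinuousLinearMap.coe_coe,
    sub_apply, one_apply_eq_self, sub_eq_zero, @eq_comm X x]
  exact ⟨apply_eq_self_of_sum_smul_apply_eq_self hA hW hα hsum,
    sum_smul_apply_eq_self_of_forall_apply_eq_self hsum⟩

theorem stmt15 {X : Type*} [NormedAddCommGroup X] [NormedSpace ℂ X] [CompleteSpace X]
    (N : ℕ) (A : Fin N → (X →L[ℂ] X)) (hA : ∀ k, ‖A k‖ ≤ 1)
    (α : Fin N → ℝ) (hα : ∀ k, 0 < α k) (hsum : ∑ k, α k = 1)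
    (hW : ∀ k, ∀ x : X, ‖(A k) x‖ = ‖x‖ → (A k) x = x) :
    LinearMap.ker ((1 - ∑ k, (α k : ℂ) • A k : X →L[ℂ] X) : X →ₗ[ℂ] X) = ⨅ k, LinearMap.ker ((1 - A k : X →L[ℂ] X) : X →ₗ[ℂ] X) :=
  stmt15_general N A hA α hα hsum hW
end
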